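/- arXiv:2404.07037 — 2 statements merged into one kernel-verified Lean document; each statement's English description precedes it below -/
import Mathlib

section
/- Let (U, cs) be a standard closure system and c ∈ U. Then c has no D-generator if and only if every non-trivial minimal generator of c is a singleton, which is in turn equivalent to the set {a ∈ U : c ∉ cl({a})} being closed. -/
/-- `cl^b(A) = ⋃_{a ∈ A} cl({a})`. -/
def clb {U : Type*} (cl : Set U → Set U) (A : Set U) : Set U := ⋃ a ∈ A, cl {a}

/-- The closure operator of a closure system `cs`. -/
def clOf {U : Type*} (cs : Set (Set U)) (A : Set U) : Set U :=
  ⋂₀ {F | F ∈ cs ∧ A ⊆ F}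

/-- A closure system is standard if `cl({a}) \ {a}` is closed for every `a`. -/
def IsStandard {U : Type*} (cs : Set (Set U)) : Prop :=
  ∀ a : U, clOf cs {a} \ {a} ∈ cs

/-- `A` is a minimal generator of `c` (possibly the trivial one `{c}`):
`c ∈ cl(A)` and `c ∉ cl(A')` for all proper subsets `A'` of `A`. -/
def MinGen' {U : Type*} (cl : Set U → Set U) (c : U) (A : Set U) : Prop :=
  c ∈ cl A ∧ ∀ A' ⊂ A, c ∉ cl A'

/-- `A` is a `D`-generator of `c`. -/
def DGen' {U : Type*} (cl : Set U → Set U) (c : U) (A : Set U) : Prop :=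
  MinGen' cl c A ∧ c ∉ clb cl A ∧
    ∀ A', MinGen' cl c A' → A' ⊆ clb cl A → A' = A

section Aux

variable {U : Type*} [Fintype U] {cs : Set (Set U)}

lemma subset_clOf (A : Set U) : A ⊆ clOf cs A :=
  fun _ hx _ hF => hF.2 hx

lemma clOf_subset {F : Set U} (hF : F ∈ cs) {A : Set U} (hAF : A ⊆ F) :
    clOf cs A ⊆ F := Set.sInter_subset_of_mem ⟨hF, hAF⟩

lemma sInter_insert_univ_mem (huniv : Set.univ ∈ cs)
    (hinter : ∀ F₁ ∈ cs, ∀ F₂ ∈ cs, F₁ ∩ F₂ ∈ cs)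
    {T : Set (Set U)} (hT : T.Finite) :
    T ⊆ cs → ⋂₀ insert Set.univ T ∈ cs := by
  refine Set.Finite.induction_on
    (motive := fun T _ => T ⊆ cs → ⋂₀ insert Set.univ T ∈ cs) T hT ?_ ?_
  · intro _; simpa using huniv
  · intro F T' _ _ ih hsub
    rw [Set.insert_comm, Set.sInter_insert]
    exact hinter F (hsub (Set.mem_insert _ _)) _
      (ih fun x hx => hsub (Set.mem_insert_of_mem _ hx))

lemma clOf_mem (huniv : Set.univ ∈ cs)
    (hinter : ∀ F₁ ∈ cs, ∀ F₂ ∈ cs, F₁ ∩ F₂ ∈ cs) (A : Set U) :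
    clOf cs A ∈ cs := by
  have h1 : insert Set.univ {F | F ∈ cs ∧ A ⊆ F} = {F | F ∈ cs ∧ A ⊆ F} :=
    Set.insert_eq_of_mem ⟨huniv, Set.subset_univ A⟩
  rw [clOf, ← h1]
  exact sInter_insert_univ_mem huniv hinter (Set.toFinite _) (fun F hF => hF.1)

lemma mem_clb_iff {cl : Set U → Set U} {A : Set U} {x : U} :
    x ∈ clb cl A ↔ ∃ a ∈ A, x ∈ cl {a} := by
  simp [clb]

lemma subset_clb {A : Set U} : A ⊆ clb (clOf cs) A :=
  fun a ha => mem_clb_iff.mpr ⟨a, ha, subset_clOf {a} rfl⟩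

lemma clb_subset_of_subset (huniv : Set.univ ∈ cs)
    (hinter : ∀ F₁ ∈ cs, ∀ F₂ ∈ cs, F₁ ∩ F₂ ∈ cs)
    {A B : Set U} (h : B ⊆ clb (clOf cs) A) :
    clb (clOf cs) B ⊆ clb (clOf cs) A := by
  intro x hx
  obtain ⟨b, hb, hxb⟩ := mem_clb_iff.mp hx
  obtain ⟨a, ha, hba⟩ := mem_clb_iff.mp (h hb)
  exact mem_clb_iff.mpr ⟨a, ha,
    clOf_subset (clOf_mem huniv hinter {a}) (Set.singleton_subset_iff.mpr hba) hxb⟩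

lemma cl_antisymm (hstd : IsStandard cs) {a b : U}
    (hab : a ∈ clOf cs {b}) (hba : b ∈ clOf cs {a}) : a = b := by
  by_contra hne
  have h2 : clOf cs {a} ⊆ clOf cs {b} \ {b} :=
    clOf_subset (hstd b) (Set.singleton_subset_iff.mpr ⟨hab, by simp [hne]⟩)
  exact (h2 hba).2 rfl

lemma exists_minGen {c : U} {S : Set U} (hc : c ∈ clOf cs S) :
    ∃ A ⊆ S, MinGen' (clOf cs) c A := by
  obtain ⟨A, hA, hmin⟩ := Set.exists_min_image {A | A ⊆ S ∧ c ∈ clOf cs A}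
    Set.ncard (Set.toFinite _) ⟨S, Set.Subset.rfl, hc⟩
  refine ⟨A, hA.1, hA.2, fun A' hA' hc' => ?_⟩
  exact absurd (hmin A' ⟨hA'.subset.trans hA.1, hc'⟩)
    (not_le.mpr (Set.ncard_lt_ncard hA' (Set.toFinite _)))

lemma minGen_subset_of_clb_eq (huniv : Set.univ ∈ cs)
    (hinter : ∀ F₁ ∈ cs, ∀ F₂ ∈ cs, F₁ ∩ F₂ ∈ cs) (hstd : IsStandard cs)
    {c : U} {X Y : Set U}
    (hX : MinGen' (clOf cs) c X) (hY : MinGen' (clOf cs) c Y)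
    (hXY : clb (clOf cs) X = clb (clOf cs) Y) : X ⊆ Y := by
  intro b hb
  obtain ⟨b', hb', hbb'⟩ := mem_clb_iff.mp (hXY ▸ subset_clb hb)
  obtain ⟨b'', hb'', hb'b''⟩ := mem_clb_iff.mp (hXY ▸ subset_clb hb' : b' ∈ clb (clOf cs) X)
  have hbb'' : b ∈ clOf cs {b''} :=
    clOf_subset (clOf_mem huniv hinter {b''}) (Set.singleton_subset_iff.mpr hb'b'') hbb'
  by_cases hcase : b = b''
  · -- then b' ∈ cl {b} and b ∈ cl {b'}, so b = b' ∈ Y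
    subst hcase
    exact cl_antisymm hstd hbb' hb'b'' ▸ hb'
  · -- then c ∈ cl (X \ {b}), contradicting minimality
    exfalso
    have hsub : X ⊆ clOf cs (X \ {b}) := by
      intro x hx
      by_cases hxb : x = b
      · have hb''mem : b'' ∈ X \ {b} := ⟨hb'', fun h => hcase h.symm⟩
        have hmem : b'' ∈ clOf cs (X \ {b}) := subset_clOf _ hb''mem
        rw [hxb]
        exact clOf_subset (clOf_mem huniv hinter _)
          (Set.singleton_subset_iff.mpr hmem) hbb''
      · exact subset_clOf _ ⟨hx, hxb⟩
    have hcc : c ∈ clOf cs (X \ {b}) :=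
      clOf_subset (clOf_mem huniv hinter (X \ {b})) hsub hX.1
    exact hX.2 (X \ {b}) (Set.sdiff_singleton_ssubset.mpr hb) hcc

lemma minGen_eq_of_clb_eq (huniv : Set.univ ∈ cs)
    (hinter : ∀ F₁ ∈ cs, ∀ F₂ ∈ cs, F₁ ∩ F₂ ∈ cs) (hstd : IsStandard cs)
    {c : U} {X Y : Set U}
    (hX : MinGen' (clOf cs) c X) (hY : MinGen' (clOf cs) c Y)
    (hXY : clb (clOf cs) X = clb (clOf cs) Y) : X = Y :=
  Set.Subset.antisymm (minGen_subset_of_clb_eq huniv hinter hstd hX hY hXY)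
    (minGen_subset_of_clb_eq huniv hinter hstd hY hX hXY.symm)

end Aux

/-- `c` has no `D`-generator iff every non-trivial minimal
generator of `c` is a singleton, which is equivalent to
`{a ∈ U : c ∉ cl({a})}` being closed. -/
theorem stmt10 {U : Type*} [Fintype U] (cs : Set (Set U))
    (huniv : Set.univ ∈ cs)
    (hinter : ∀ F₁ ∈ cs, ∀ F₂ ∈ cs, F₁ ∩ F₂ ∈ cs)
    (hstd : IsStandard cs) (c : U) :
    ((¬ ∃ A, DGen' (clOf cs) c A) ↔
      (∀ A, MinGen' (clOf cs) c A → A ≠ {c} → ∃ a : U, A = {a})) ∧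
    ((∀ A, MinGen' (clOf cs) c A → A ≠ {c} → ∃ a : U, A = {a}) ↔
      {a : U | c ∉ clOf cs {a}} ∈ cs) := by
  have hcS : c ∉ {a : U | c ∉ clOf cs {a}} := fun h => h (subset_clOf {c} rfl)
  constructor
  · constructor
    · -- no D-generator → every nontrivial min gen is a singleton
      intro hnoD
      by_contra hP
      push_neg at hP
      obtain ⟨A, hmgA, hne, hnotsing⟩ := hP
      -- c ∉ clb A
      have hclbA : c ∉ clb (clOf cs) A := by
        intro hc
        obtain ⟨a, haA, hca⟩ := mem_clb_iff.mp hc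
        rcases eq_or_ne ({a} : Set U) A with h | h
        · exact hnotsing a h.symm
        · exact hmgA.2 {a} ⟨Set.singleton_subset_iff.mpr haA, fun hsub => h
            (Set.Subset.antisymm (Set.singleton_subset_iff.mpr haA) hsub)⟩ hca
      -- choose a candidate with minimal clb
      obtain ⟨B, ⟨hmgB, hclbB⟩, hmin⟩ := Set.exists_min_image
        {B | MinGen' (clOf cs) c B ∧ c ∉ clb (clOf cs) B}
        (fun B => (clb (clOf cs) B).ncard) (Set.toFinite _) ⟨A, hmgA, hclbA⟩
      refine hnoD ⟨B, hmgB, hclbB, fun B' hmgB' hsub => ?_⟩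
      have hsub' : clb (clOf cs) B' ⊆ clb (clOf cs) B :=
        clb_subset_of_subset huniv hinter hsub
      have hB'mem : B' ∈ {B | MinGen' (clOf cs) c B ∧ c ∉ clb (clOf cs) B} :=
        ⟨hmgB', fun h => hclbB (hsub' h)⟩
      have heq : clb (clOf cs) B' = clb (clOf cs) B :=
        Set.eq_of_subset_of_ncard_le hsub' (hmin B' hB'mem) (Set.toFinite _)
      exact minGen_eq_of_clb_eq huniv hinter hstd hmgB' hmgB heq
    · -- every nontrivial min gen is a singleton → no D-generator
      intro hP ⟨A, hmgA, hclbA, _⟩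
      have hcA : c ∉ A := fun h => hclbA (subset_clb h)
      have hne : A ≠ {c} := fun h => hcA (h ▸ rfl)
      obtain ⟨a, rfl⟩ := hP A hmgA hne
      exact hclbA (mem_clb_iff.mpr ⟨a, rfl, hmgA.1⟩)
  · constructor
    · -- every nontrivial min gen is a singleton → S is closed
      intro hP
      set S := {a : U | c ∉ clOf cs {a}} with hS
      have hcclS : c ∉ clOf cs S := by
        intro hc
        obtain ⟨A, hAS, hmgA⟩ := exists_minGen hc
        have hne : A ≠ {c} := fun h => hcS (hAS (h ▸ rfl))
        obtain ⟨a, rfl⟩ := hP A hmgA hne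
        exact hAS rfl hmgA.1
      have hSeq : S = clOf cs S := by
        refine Set.Subset.antisymm (subset_clOf S) (fun x hx => ?_)
        intro hcx
        exact hcclS (clOf_subset (clOf_mem huniv hinter S)
          (Set.singleton_subset_iff.mpr hx) hcx)
      show S ∈ cs
      rw [hSeq]
      exact clOf_mem huniv hinter S
    · -- S closed → every nontrivial min gen is a singleton
      intro hQ A hmgA hne
      by_contra hnotsing
      push_neg at hnotsing
      have hAS : A ⊆ {a : U | c ∉ clOf cs {a}} := by
        intro a haA hca
        exact hmgA.2 {a} ⟨Set.singleton_subset_iff.mpr haA, fun hsub =>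
          hnotsing a (Set.Subset.antisymm hsub (Set.singleton_subset_iff.mpr haA))⟩ hca
      exact hcS (clOf_subset hQ hAS hmgA.1)
end

section
/- In the reduction closure system for Theorem 2 — U = V ∪ C ∪ {a, b} with C = {c_1,…,c_m}, and implications {a,v} → c_j for v ∈ C_j, C → b, {v,w} → b for variables v, w in conflict, and {c_j} → a for each j — the D-relation is acyclic; moreover, every directed D-path has length at most 2. -/
/-- `F` is closed for the implicational base `I`. -/
def ImpClosed {U : Type*} (I : Set (Set U × U)) (F : Set U) : Prop :=
  ∀ p ∈ I, p.1 ⊆ F → p.2 ∈ F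

/-- The closure operator induced by an implicational base `I`. -/
def clI {U : Type*} (I : Set (Set U × U)) (A : Set U) : Set U :=
  ⋂₀ {F | ImpClosed I F ∧ A ⊆ F}

/-- `A` is a minimal generator of `c`. -/
def MinGen {U : Type*} (cl : Set U → Set U) (c : U) (A : Set U) : Prop :=
  c ∉ A ∧ c ∈ cl A ∧ ∀ A' ⊂ A, c ∉ cl A'

/-- `A` is a `D`-generator of `c`. -/
def DGen {U : Type*} (cl : Set U → Set U) (c : U) (A : Set U) : Prop :=
  MinGen cl c A ∧ c ∉ clb cl A ∧
    ∀ A', MinGen cl c A' → A' ⊆ clb cl A → A' = A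

/-- Two (distinct) variables are in conflict if some clause contains both. -/
def Conflict {V : Type*} {m : ℕ} (C : Fin m → Finset V) (v w : V) : Prop :=
  v ≠ w ∧ ∃ j, v ∈ C j ∧ w ∈ C j

/-! Every implication of the reduction concludes in `C ∪ {a, b}`, so variables are never derived.
If `a ∈ cl(A)` then `A` contains `a` or a clause, hence `a ∈ cl^b(A)`: `a` has no `D`-generator.
A `D`-generator of a clause `c_j` contains some `v ∈ C_j` and has `a` in its `cl^b`, and `{a, v}` is
itself a minimal generator of `c_j`, so the generator is `{a, v}`. Hence every `D`-edge strictly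
decreases the layer `b ↦ 2`, `c_j ↦ 1`, `a, v ↦ 0`, which rules out cycles and paths of three edges. -/

section ClosureOfBase

variable {U : Type*} {I : Set (Set U × U)} {A F : Set U}

lemma subset_clI : A ⊆ clI I A :=
  fun _ hx => Set.mem_sInter.mpr fun _ hF => hF.2 hx

lemma clI_subset_of_impClosed (hF : ImpClosed I F) (hA : A ⊆ F) : clI I A ⊆ F :=
  fun _ hx => Set.mem_sInter.mp hx F ⟨hF, hA⟩

lemma impClosed_clI : ImpClosed I (clI I A) := fun p hp hsub =>
  Set.mem_sInter.mpr fun _ hF => hF.1 p hp (hsub.trans (clI_subset_of_impClosed hF.1 hF.2))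

lemma subset_clb_clI : A ⊆ clb (clI I) A :=
  fun _ hx => Set.mem_biUnion hx (subset_clI rfl)

end ClosureOfBase

namespace Reduction

variable {V : Type*} {m : ℕ} {C : Fin m → Finset V}

local notation "𝐚" => Sum.inr (Sum.inr false)
local notation "𝐛" => Sum.inr (Sum.inr true)
local notation "𝐜" j:max => Sum.inr (Sum.inl j)

def base (C : Fin m → Finset V) : Set (Set (V ⊕ (Fin m ⊕ Bool)) × (V ⊕ (Fin m ⊕ Bool))) :=
  {p | ∃ (j : Fin m) (v : V), v ∈ C j ∧ p = ({𝐚, Sum.inl v}, 𝐜 j)} ∪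
  {({x | ∃ j : Fin m, x = 𝐜 j}, 𝐛)} ∪
  {p | ∃ v w : V, Conflict C v w ∧ p = ({Sum.inl v, Sum.inl w}, 𝐛)} ∪
  {p | ∃ j : Fin m, p = ({𝐜 j}, 𝐚)}

local notation "cl" => clI (base C)

lemma impClosed_base {F : Set (V ⊕ (Fin m ⊕ Bool))}
    (h₁ : ∀ j v, v ∈ C j → 𝐚 ∈ F → Sum.inl v ∈ F → 𝐜 j ∈ F)
    (h₂ : (∀ j, 𝐜 j ∈ F) → 𝐛 ∈ F)
    (h₃ : ∀ v w, Conflict C v w → Sum.inl v ∈ F → Sum.inl w ∈ F → 𝐛 ∈ F)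
    (h₄ : ∀ j, 𝐜 j ∈ F → 𝐚 ∈ F) :
    ImpClosed (base C) F := by
  rintro p (((⟨j, v, hv, rfl⟩ | rfl) | ⟨v, w, hvw, rfl⟩) | ⟨j, rfl⟩) hsub
  · exact h₁ j v hv (hsub (.inl rfl)) (hsub (.inr rfl))
  · exact h₂ fun j => hsub ⟨j, rfl⟩
  · exact h₃ v w hvw (hsub (.inl rfl)) (hsub (.inr rfl))
  · exact h₄ j (hsub rfl)

lemma a_mem_clI_of_clause_mem {A : Set (V ⊕ (Fin m ⊕ Bool))} {j : Fin m} (h : 𝐜 j ∈ cl A) :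
    𝐚 ∈ cl A :=
  impClosed_clI ({𝐜 j}, 𝐚) (Or.inr ⟨j, rfl⟩) (Set.singleton_subset_iff.mpr h)

lemma clause_mem_clI_pair {j : Fin m} {v : V} (hv : v ∈ C j) :
    𝐜 j ∈ cl {𝐚, Sum.inl v} :=
  impClosed_clI ({𝐚, Sum.inl v}, 𝐜 j) (Or.inl (Or.inl (Or.inl ⟨j, v, hv, rfl⟩))) subset_clI

lemma var_mem_of_mem_clI {A : Set (V ⊕ (Fin m ⊕ Bool))} {v : V} (h : Sum.inl v ∈ cl A) :
    Sum.inl v ∈ A := by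
  have hF : ImpClosed (base C) (A ∪ Set.range Sum.inr) := by
    apply impClosed_base <;> intros <;> exact .inr ⟨_, rfl⟩
  rcases clI_subset_of_impClosed hF Set.subset_union_left h with hA | ⟨_, hv⟩
  · exact hA
  · cases hv

lemma a_mem_or_exists_clause_mem_of_a_mem_clI {A : Set (V ⊕ (Fin m ⊕ Bool))} (h : 𝐚 ∈ cl A) :
    𝐚 ∈ A ∨ ∃ j, 𝐜 j ∈ A := by
  by_contra! hA
  obtain ⟨ha, hc⟩ := hA
  have hF : ImpClosed (base C) (A ∪ {𝐛}) := by
    refine impClosed_base ?_ (fun _ => .inr rfl) (fun _ _ _ _ _ => .inr rfl) ?_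
    · rintro j v _ (h | h) _
      · exact absurd h ha
      · cases h
    · rintro j (h | h)
      · exact absurd h (hc j)
      · cases h
  rcases clI_subset_of_impClosed hF Set.subset_union_left h with h | h
  · exact ha h
  · cases h

lemma exists_var_mem_of_clause_mem_clI {A : Set (V ⊕ (Fin m ⊕ Bool))} {j : Fin m}
    (hj : 𝐜 j ∉ A) (h : 𝐜 j ∈ cl A) : ∃ v ∈ C j, Sum.inl v ∈ A := by
  by_contra! hA
  have hF : ImpClosed (base C) {x | x ≠ 𝐜 j ∧ ∀ v ∈ C j, x ≠ Sum.inl v} := by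
    refine impClosed_base ?_ (fun _ => by simp) (fun _ _ _ _ _ => by simp) (fun _ _ => by simp)
    intro k v hv _ hvF
    obtain rfl | hkj := eq_or_ne k j
    · exact absurd rfl (hvF.2 v hv)
    · simp [hkj]
  have hAF : A ⊆ {x | x ≠ 𝐜 j ∧ ∀ v ∈ C j, x ≠ Sum.inl v} := by
    refine fun x hx => ⟨?_, ?_⟩
    · rintro rfl; exact hj hx
    · rintro v hv rfl; exact hA v hv hx
  exact (clI_subset_of_impClosed hF hAF h).1 rfl

lemma a_mem_clb_of_a_mem_clI {A : Set (V ⊕ (Fin m ⊕ Bool))} (h : 𝐚 ∈ cl A) :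
    𝐚 ∈ clb cl A := by
  rcases a_mem_or_exists_clause_mem_of_a_mem_clI h with ha | ⟨j, hj⟩
  · exact subset_clb_clI ha
  · exact Set.mem_biUnion hj (a_mem_clI_of_clause_mem (subset_clI rfl))

lemma not_dGen_a (A : Set (V ⊕ (Fin m ⊕ Bool))) : ¬ DGen cl 𝐚 A :=
  fun h => h.2.1 (a_mem_clb_of_a_mem_clI h.1.2.1)

/-- A proper subset of `{a, v}` implying `c_j` would have to contain a variable of `C_j`
and, since `a` follows from `c_j`, also `a`. -/
lemma minGen_pair {j : Fin m} {v : V} (hv : v ∈ C j) :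
    MinGen cl (𝐜 j) {𝐚, Sum.inl v} := by
  refine ⟨by simp, clause_mem_clI_pair hv, fun A hA hcA => hA.2 ?_⟩
  have hjA : 𝐜 j ∉ A := fun h => by simpa using hA.1 h
  have hvA : Sum.inl v ∈ A := by
    obtain ⟨w, -, hw⟩ := exists_var_mem_of_clause_mem_clI hjA hcA
    obtain rfl : w = v := by simpa using hA.1 hw
    exact hw
  have haA : 𝐚 ∈ A := by
    rcases a_mem_or_exists_clause_mem_of_a_mem_clI (a_mem_clI_of_clause_mem hcA) with ha | ⟨k, hk⟩
    · exact ha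
    · simpa using hA.1 hk
  exact Set.insert_subset haA (Set.singleton_subset_iff.mpr hvA)

lemma dGen_clause {A : Set (V ⊕ (Fin m ⊕ Bool))} {j : Fin m} (h : DGen cl (𝐜 j) A) :
    ∃ v ∈ C j, A = {𝐚, Sum.inl v} := by
  obtain ⟨⟨hjA, hcA, -⟩, -, huniq⟩ := h
  obtain ⟨v, hv, hvA⟩ := exists_var_mem_of_clause_mem_clI hjA hcA
  have hsub : {𝐚, Sum.inl v} ⊆ clb cl A :=
    Set.insert_subset (a_mem_clb_of_a_mem_clI (a_mem_clI_of_clause_mem hcA))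
      (Set.singleton_subset_iff.mpr (subset_clb_clI hvA))
  exact ⟨v, hv, (huniq _ (minGen_pair hv) hsub).symm⟩

lemma dGen_target {c : V ⊕ (Fin m ⊕ Bool)} {A : Set (V ⊕ (Fin m ⊕ Bool))} (h : DGen cl c A) :
    c = 𝐛 ∨ ∃ j, c = 𝐜 j := by
  rcases c with v | j | _ | _
  · exact absurd (var_mem_of_mem_clI h.1.2.1) h.1.1
  · exact .inr ⟨j, rfl⟩
  · exact absurd h (not_dGen_a A)
  · exact .inl rfl

def layer : V ⊕ (Fin m ⊕ Bool) → ℕ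
  | 𝐛 => 2
  | 𝐜 _ => 1
  | _ => 0

lemma layer_le_two (x : V ⊕ (Fin m ⊕ Bool)) : layer x ≤ 2 := by
  rcases x with _ | _ | _ | _ <;> simp [layer]

lemma layer_lt_of_dGen {c y : V ⊕ (Fin m ⊕ Bool)} {A : Set (V ⊕ (Fin m ⊕ Bool))}
    (h : DGen cl c A) (hy : y ∈ A) : layer y < layer c := by
  rcases dGen_target h with rfl | ⟨j, rfl⟩
  · have hyb : y ≠ 𝐛 := fun hyb => h.1.1 (hyb ▸ hy)
    rcases y with _ | _ | _ | _ <;> simp_all [layer]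
  · obtain ⟨v, -, rfl⟩ := dGen_clause h
    rcases hy with rfl | rfl <;> simp [layer]

end Reduction

theorem stmt14_general {V : Type*} (m : ℕ)
    (C : Fin m → Finset V)
    (I : Set (Set (V ⊕ (Fin m ⊕ Bool)) × (V ⊕ (Fin m ⊕ Bool))))
    (hI : I =
      {p | ∃ (j : Fin m) (v : V), v ∈ C j ∧
        p = ({Sum.inr (Sum.inr false), Sum.inl v}, Sum.inr (Sum.inl j))} ∪
      {({x | ∃ j : Fin m, x = Sum.inr (Sum.inl j)}, Sum.inr (Sum.inr true))} ∪
      {p | ∃ v w : V, Conflict C v w ∧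
        p = ({Sum.inl v, Sum.inl w}, Sum.inr (Sum.inr true))} ∪
      {p | ∃ j : Fin m, p = ({Sum.inr (Sum.inl j)}, Sum.inr (Sum.inr false))})
    (D : (V ⊕ (Fin m ⊕ Bool)) → (V ⊕ (Fin m ⊕ Bool)) → Prop)
    (hD : D = fun c a => ∃ A, DGen (clI I) c A ∧ a ∈ A) :
    (∀ x, ¬ Relation.TransGen D x x) ∧
    (∀ x y z w, D x y → D y z → D z w → False) := by
  obtain rfl : I = Reduction.base C := hI
  have hlayer : ∀ x y, D x y → Reduction.layer y < Reduction.layer x := by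
    intro x y hxy
    obtain ⟨A, hA, hy⟩ := hD ▸ hxy
    exact Reduction.layer_lt_of_dGen hA hy
  refine ⟨fun x hx => ?_, fun x y z w hxy hyz hzw => ?_⟩
  · have hlt :=
      Relation.transGen_eq_self (r := fun a b : ℕ => a > b) ▸ hx.lift Reduction.layer hlayer
    exact lt_irrefl _ hlt
  · have := Reduction.layer_le_two x
    have := hlayer _ _ hxy
    have := hlayer _ _ hyz
    have := hlayer _ _ hzw
    omega

/-- in the second reduction, the `D`-relation
(`c D a` iff `a` belongs to some `D`-generator of `c`) is acyclic and
every directed `D`-path has length at most 2 (no three consecutive edges). -/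
theorem stmt14 {V : Type*} [Fintype V] (m : ℕ)
    (C : Fin m → Finset V) (hC : ∀ j, (C j).card = 3)
    (I : Set (Set (V ⊕ (Fin m ⊕ Bool)) × (V ⊕ (Fin m ⊕ Bool))))
    (hI : I =
      {p | ∃ (j : Fin m) (v : V), v ∈ C j ∧
        p = ({Sum.inr (Sum.inr false), Sum.inl v}, Sum.inr (Sum.inl j))} ∪
      {({x | ∃ j : Fin m, x = Sum.inr (Sum.inl j)}, Sum.inr (Sum.inr true))} ∪
      {p | ∃ v w : V, Conflict C v w ∧
        p = ({Sum.inl v, Sum.inl w}, Sum.inr (Sum.inr true))} ∪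
      {p | ∃ j : Fin m, p = ({Sum.inr (Sum.inl j)}, Sum.inr (Sum.inr false))})
    (D : (V ⊕ (Fin m ⊕ Bool)) → (V ⊕ (Fin m ⊕ Bool)) → Prop)
    (hD : D = fun c a => ∃ A, DGen (clI I) c A ∧ a ∈ A) :
    (∀ x, ¬ Relation.TransGen D x x) ∧
    (∀ x y z w, D x y → D y z → D z w → False) :=
  stmt14_general m C I hI D hD
end
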